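/- The one-qubit Clifford group, i.e. the normalizer of the Pauli group in U(2) modulo global phases, is generated by the images of the Hadamard gate H = (1/√2)[[1,1],[1,-1]] and the phase gate Q = [[1,0],[0,i]]. -/

import Mathlib

/-!
Every element of the Pauli group is `c • P` with `c ^ 4 = 1` and `P ∈ {1, X, Y, Z}`, so
conjugation by an element `g` of the Pauli normalizer sends the traceless involutions `X` and `Z`
to signed Paulis `±X, ±Y, ±Z`, and keeps them anticommuting. As `X` and `Z` generate `M₂(ℂ)`,
whose centre is the scalars, the pair `(g X g⋆, g Z g⋆)` determines `g` up to a phase. Words in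
`H` and `Q` realise every admissible pair: `Qᵏ` and `H Qᵏ` send `X` to each signed Pauli, and
`H Qᵏ H` fixes `X` and sends `Z` to `Z, -Y, -Z, Y`.
-/

open Matrix

abbrev Mat2 := Matrix (Fin 2) (Fin 2) ℂ

def Xm : Mat2 := !![0, 1; 1, 0]
def Ym : Mat2 := !![0, -Complex.I; Complex.I, 0]
def Zm : Mat2 := !![1, 0; 0, -1]

lemma Xm_mem : Xm ∈ Matrix.unitaryGroup (Fin 2) ℂ := by
  rw [Matrix.mem_unitaryGroup_iff]
  ext i j
  fin_cases i <;> fin_cases j <;>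
    simp [Xm, Matrix.mul_apply, Fin.sum_univ_two, Matrix.star_apply, Matrix.one_apply]

lemma Ym_mem : Ym ∈ Matrix.unitaryGroup (Fin 2) ℂ := by
  rw [Matrix.mem_unitaryGroup_iff]
  ext i j
  fin_cases i <;> fin_cases j <;>
    simp [Ym, Matrix.mul_apply, Fin.sum_univ_two, Matrix.star_apply, Matrix.one_apply,
      Complex.ext_iff]

lemma Zm_mem : Zm ∈ Matrix.unitaryGroup (Fin 2) ℂ := by
  rw [Matrix.mem_unitaryGroup_iff]
  ext i j
  fin_cases i <;> fin_cases j <;>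
    simp [Zm, Matrix.mul_apply, Fin.sum_univ_two, Matrix.star_apply, Matrix.one_apply]

def Xu : Matrix.unitaryGroup (Fin 2) ℂ := ⟨Xm, Xm_mem⟩
def Yu : Matrix.unitaryGroup (Fin 2) ℂ := ⟨Ym, Ym_mem⟩
def Zu : Matrix.unitaryGroup (Fin 2) ℂ := ⟨Zm, Zm_mem⟩

/-- The one-qubit Pauli group `P₁ = ⟨X, Y, Z⟩ ⊆ U(2)`. -/
def PauliGroup : Subgroup (Matrix.unitaryGroup (Fin 2) ℂ) := Subgroup.closure {Xu, Yu, Zu}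

/-- The normalizer of the Pauli group in `U(2)`. -/
def PauliNormalizer : Subgroup (Matrix.unitaryGroup (Fin 2) ℂ) := Subgroup.normalizer (PauliGroup : Set (Matrix.unitaryGroup (Fin 2) ℂ))

/-- The subgroup of unit scalar multiples of the identity in `U(2)`. -/
def ScalarU : Subgroup (Matrix.unitaryGroup (Fin 2) ℂ) where
  carrier := {U | ∃ c : ℂ, (U : Mat2) = c • (1 : Mat2)}
  one_mem' := ⟨1, by simp⟩
  mul_mem' := by
    rintro a b ⟨c, hc⟩ ⟨d, hd⟩
    exact ⟨c * d, by
      have : ((a * b : Matrix.unitaryGroup (Fin 2) ℂ) : Mat2) = (a : Mat2) * b := rfl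
      rw [this, hc, hd, smul_mul_smul_comm, one_mul]⟩
  inv_mem' := by
    rintro a ⟨c, hc⟩
    refine ⟨(starRingEnd ℂ) c, ?_⟩
    have : ((a⁻¹ : Matrix.unitaryGroup (Fin 2) ℂ) : Mat2) = star (a : Mat2) := rfl
    rw [this, hc]
    simp [star_smul]

lemma ScalarU_conj_mem (u v : Matrix.unitaryGroup (Fin 2) ℂ) (hv : v ∈ ScalarU) :
    u * v * u⁻¹ ∈ ScalarU := by
  obtain ⟨c, hc⟩ := hv
  refine ⟨c, ?_⟩
  have h1 : ((u * v * u⁻¹ : Matrix.unitaryGroup (Fin 2) ℂ) : Mat2)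
      = (u : Mat2) * (v : Mat2) * ((u⁻¹ : Matrix.unitaryGroup (Fin 2) ℂ) : Mat2) := rfl
  have h2 : (u : Mat2) * ((u⁻¹ : Matrix.unitaryGroup (Fin 2) ℂ) : Mat2) = 1 :=
    congrArg (fun w : Matrix.unitaryGroup (Fin 2) ℂ => (w : Mat2)) (mul_inv_cancel u)
  rw [h1, hc, mul_smul_comm, mul_one, smul_mul_assoc, h2]

instance : (ScalarU.subgroupOf PauliNormalizer).Normal := by
  constructor
  intro n hmem g
  rw [Subgroup.mem_subgroupOf] at hmem ⊢
  exact ScalarU_conj_mem (g : Matrix.unitaryGroup (Fin 2) ℂ) n hmem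

/-- The one-qubit Clifford group: the normalizer of the Pauli group modulo global phases. -/
def Cliff1 := PauliNormalizer ⧸ (ScalarU.subgroupOf PauliNormalizer)

noncomputable instance : Group Cliff1 := QuotientGroup.Quotient.group _

noncomputable def Hm : Mat2 := (1 / (Real.sqrt 2 : ℂ)) • !![1, 1; 1, -1]
def Qm : Mat2 := !![1, 0; 0, Complex.I]

open Complex

local notation "U₂" => Matrix.unitaryGroup (Fin 2) ℂ
local notation "Ad" => Unitary.conjStarAlgAut ℂ Mat2

lemma Xm_mul_Xm : Xm * Xm = 1 := by simp [Xm, Matrix.one_fin_two]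
lemma Ym_mul_Ym : Ym * Ym = 1 := by simp [Ym, Matrix.one_fin_two]
lemma Zm_mul_Zm : Zm * Zm = 1 := by simp [Zm, Matrix.one_fin_two]
lemma Xm_mul_Ym : Xm * Ym = I • Zm := by simp [Xm, Ym, Zm]
lemma Ym_mul_Xm : Ym * Xm = (-I) • Zm := by simp [Xm, Ym, Zm]
lemma Ym_mul_Zm : Ym * Zm = I • Xm := by simp [Xm, Ym, Zm]
lemma Zm_mul_Ym : Zm * Ym = (-I) • Xm := by simp [Xm, Ym, Zm]
lemma Zm_mul_Xm : Zm * Xm = I • Ym := by simp [Xm, Ym, Zm]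
lemma Xm_mul_Zm : Xm * Zm = (-I) • Ym := by simp [Xm, Ym, Zm]

lemma Zm_mul_Xm_eq_neg : Zm * Xm = -(Xm * Zm) := by
  rw [Zm_mul_Xm, Xm_mul_Zm, neg_smul, neg_neg]

lemma star_Xm : star Xm = Xm := by ext i j; fin_cases i <;> fin_cases j <;> simp [Xm]
lemma star_Ym : star Ym = Ym := by ext i j; fin_cases i <;> fin_cases j <;> simp [Ym]
lemma star_Zm : star Zm = Zm := by ext i j; fin_cases i <;> fin_cases j <;> simp [Zm]

lemma trace_Xm : Xm.trace = 0 := by simp [Xm, Matrix.trace_fin_two]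
lemma trace_Zm : Zm.trace = 0 := by simp [Zm, Matrix.trace_fin_two]

lemma adjoin_Xm_Zm : Algebra.adjoin ℂ {Xm, Zm} = ⊤ := by
  refine Algebra.eq_top_iff.2 fun M => ?_
  have hX : Xm ∈ Algebra.adjoin ℂ {Xm, Zm} := Algebra.subset_adjoin (by simp)
  have hZ : Zm ∈ Algebra.adjoin ℂ {Xm, Zm} := Algebra.subset_adjoin (by simp)
  have hM : M = ((M 0 0 + M 1 1) / 2) • (1 : Mat2) + ((M 0 0 - M 1 1) / 2) • Zm
      + ((M 0 1 + M 1 0) / 2) • Xm + ((M 1 0 - M 0 1) / 2) • (Xm * Zm) := by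
    ext i j; fin_cases i <;> fin_cases j <;> simp [Xm, Zm] <;> ring
  rw [hM]
  exact add_mem (add_mem (add_mem (Subalgebra.smul_mem _ (one_mem _) _)
    (Subalgebra.smul_mem _ hZ _)) (Subalgebra.smul_mem _ hX _))
    (Subalgebra.smul_mem _ (mul_mem hX hZ) _)

lemma starAlgEquiv_ext_of_Xm_Zm {φ ψ : Mat2 ≃⋆ₐ[ℂ] Mat2} (hX : φ Xm = ψ Xm)
    (hZ : φ Zm = ψ Zm) : φ = ψ := by
  have h := AlgHom.ext_of_adjoin_eq_top adjoin_Xm_Zm (φ₁ := φ.toAlgEquiv.toAlgHom)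
    (φ₂ := ψ.toAlgEquiv.toAlgHom) (by rintro _ (rfl | rfl) <;> assumption)
  exact StarAlgEquiv.ext fun M => DFunLike.congr_fun h M

def pauliBasis : Set Mat2 := {1, Xm, Ym, Zm}

def phasedPaulis : Set Mat2 := {M | ∃ c : ℂ, c ^ 4 = 1 ∧ ∃ P ∈ pauliBasis, M = c • P}

lemma mem_phasedPaulis_of_mem_pauliBasis {P : Mat2} (hP : P ∈ pauliBasis) :
    P ∈ phasedPaulis :=
  ⟨1, one_pow _, P, hP, (one_smul _ _).symm⟩

lemma smul_mem_phasedPaulis {c : ℂ} (hc : c ^ 4 = 1) {M : Mat2} (hM : M ∈ phasedPaulis) :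
    c • M ∈ phasedPaulis := by
  obtain ⟨d, hd, P, hP, rfl⟩ := hM
  exact ⟨c * d, by rw [mul_pow, hc, hd, one_mul], P, hP, smul_smul _ _ _⟩

lemma mul_mem_phasedPaulis_of_mem_pauliBasis {P Q : Mat2} (hP : P ∈ pauliBasis)
    (hQ : Q ∈ pauliBasis) : P * Q ∈ phasedPaulis := by
  simp only [pauliBasis, Set.mem_insert_iff, Set.mem_singleton_iff] at hP hQ
  rcases hP with rfl | rfl | rfl | rfl <;> rcases hQ with rfl | rfl | rfl | rfl <;>
    simp only [one_mul, mul_one, Xm_mul_Xm, Ym_mul_Ym, Zm_mul_Zm, Xm_mul_Ym, Ym_mul_Xm,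
      Ym_mul_Zm, Zm_mul_Ym, Zm_mul_Xm, Xm_mul_Zm] <;>
    first
    | (apply mem_phasedPaulis_of_mem_pauliBasis; simp [pauliBasis]; done)
    | (apply smul_mem_phasedPaulis (by norm_num); apply mem_phasedPaulis_of_mem_pauliBasis
       simp [pauliBasis])

lemma mul_mem_phasedPaulis {M N : Mat2} (hM : M ∈ phasedPaulis) (hN : N ∈ phasedPaulis) :
    M * N ∈ phasedPaulis := by
  obtain ⟨c, hc, P, hP, rfl⟩ := hM
  obtain ⟨d, hd, Q, hQ, rfl⟩ := hN
  rw [Matrix.smul_mul, Matrix.mul_smul]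
  exact smul_mem_phasedPaulis hc (smul_mem_phasedPaulis hd
    (mul_mem_phasedPaulis_of_mem_pauliBasis hP hQ))

lemma star_mem_phasedPaulis {M : Mat2} (hM : M ∈ phasedPaulis) : star M ∈ phasedPaulis := by
  obtain ⟨c, hc, P, hP, rfl⟩ := hM
  have hPstar : star P = P := by
    simp only [pauliBasis, Set.mem_insert_iff, Set.mem_singleton_iff] at hP
    rcases hP with rfl | rfl | rfl | rfl <;> simp [star_Xm, star_Ym, star_Zm]
  rw [star_smul, hPstar]
  exact ⟨star c, by rw [← star_pow, hc, star_one], P, hP, rfl⟩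

lemma coe_mem_phasedPaulis {V : U₂} (hV : V ∈ PauliGroup) : (V : Mat2) ∈ phasedPaulis := by
  induction hV using Subgroup.closure_induction with
  | mem V hV =>
    simp only [Set.mem_insert_iff, Set.mem_singleton_iff] at hV
    rcases hV with rfl | rfl | rfl <;>
      exact mem_phasedPaulis_of_mem_pauliBasis (by simp [pauliBasis, Xu, Yu, Zu])
  | one => exact mem_phasedPaulis_of_mem_pauliBasis (by simp [pauliBasis])
  | mul V W _ _ hV hW => exact mul_mem_phasedPaulis hV hW
  | inv V _ hV => exact star_mem_phasedPaulis hV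

def signedPaulis : Set Mat2 := {Xm, -Xm, Ym, -Ym, Zm, -Zm}

lemma mem_signedPaulis_of_mem_phasedPaulis {M : Mat2} (hM : M ∈ phasedPaulis)
    (htr : M.trace = 0) (hsq : M * M = 1) : M ∈ signedPaulis := by
  obtain ⟨c, hc, P, hP, rfl⟩ := hM
  simp only [pauliBasis, Set.mem_insert_iff, Set.mem_singleton_iff] at hP
  rcases hP with rfl | hP
  · have hc0 : c = 0 := by simpa [Matrix.trace_smul] using htr
    norm_num [hc0] at hc
  have hP2 : P * P = 1 := by
    rcases hP with rfl | rfl | rfl <;> simp only [Xm_mul_Xm, Ym_mul_Ym, Zm_mul_Zm]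
  have hc2 : c * c = 1 := by
    rw [smul_mul_smul_comm, hP2] at hsq
    simpa using congrFun (congrFun hsq 0) 0
  rcases mul_self_eq_one_iff.1 hc2 with rfl | rfl <;> rcases hP with rfl | rfl | rfl <;>
    simp [signedPaulis]

lemma conj_mem_signedPaulis {U V : U₂} (hU : U ∈ PauliNormalizer) (hV : V ∈ PauliGroup)
    (htr : (V : Mat2).trace = 0) (hsq : (V : Mat2) * V = 1) : Ad U V ∈ signedPaulis := by
  refine mem_signedPaulis_of_mem_phasedPaulis ?_ ?_ ?_
  · exact coe_mem_phasedPaulis (V := U * V * U⁻¹) ((Subgroup.mem_normalizer_iff.1 hU V).1 hV)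
  · rw [Unitary.conjStarAlgAut_apply, Matrix.trace_mul_cycle, Unitary.coe_star_mul_self,
      one_mul, htr]
  · rw [← map_mul, hsq, map_one]

lemma mem_of_mem_signedPaulis_of_anticommute {τ : Mat2} (hτ : τ ∈ signedPaulis)
    (hanti : τ * Xm = -(Xm * τ)) : τ ∈ ({Ym, -Ym, Zm, -Zm} : Set Mat2) := by
  simp only [signedPaulis, Set.mem_insert_iff, Set.mem_singleton_iff] at hτ
  rcases hτ with rfl | rfl | rfl | rfl | rfl | rfl
  iterate 2
    have h00 := congrFun (congrFun hanti 0) 0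
    norm_num [Xm_mul_Xm] at h00
  all_goals simp

section Gates

variable {Hu Qu : U₂}

lemma conj_hadamard_apply (hHu : (Hu : Mat2) = Hm) (A : Mat2) :
    Ad Hu A = (1 / 2 : ℂ) • (!![1, 1; 1, -1] * A * !![1, 1; 1, -1]) := by
  have hstar : star Hm = Hm := by
    ext i j; fin_cases i <;> fin_cases j <;> simp [Hm]
  have hsqrt : (1 / (Real.sqrt 2 : ℂ)) * (1 / (Real.sqrt 2 : ℂ)) = 1 / 2 := by
    rw [div_mul_div_comm, one_mul, ← ofReal_mul, Real.mul_self_sqrt zero_le_two]; norm_num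
  rw [Unitary.conjStarAlgAut_apply, hHu, hstar, Hm, Matrix.smul_mul, Matrix.smul_mul,
    Matrix.mul_smul, smul_smul, hsqrt]

lemma conj_hadamard_Xm (hHu : (Hu : Mat2) = Hm) : Ad Hu Xm = Zm := by
  rw [conj_hadamard_apply hHu]; simp [Xm, Zm]; norm_num

lemma conj_hadamard_Ym (hHu : (Hu : Mat2) = Hm) : Ad Hu Ym = -Ym := by
  rw [conj_hadamard_apply hHu]; simp [Ym]; constructor <;> ring

lemma conj_hadamard_Zm (hHu : (Hu : Mat2) = Hm) : Ad Hu Zm = Xm := by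
  rw [conj_hadamard_apply hHu]; simp [Xm, Zm]; norm_num

lemma conj_phase_apply (hQu : (Qu : Mat2) = Qm) (A : Mat2) :
    Ad Qu A = Qm * A * !![1, 0; 0, -I] := by
  rw [Unitary.conjStarAlgAut_apply, hQu]
  congr 1
  ext i j; fin_cases i <;> fin_cases j <;> simp [Qm]

lemma conj_phase_Xm (hQu : (Qu : Mat2) = Qm) : Ad Qu Xm = Ym := by
  rw [conj_phase_apply hQu]; simp [Qm, Xm, Ym]

lemma conj_phase_Ym (hQu : (Qu : Mat2) = Qm) : Ad Qu Ym = -Xm := by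
  rw [conj_phase_apply hQu]; simp [Qm, Xm, Ym]

lemma conj_phase_Zm (hQu : (Qu : Mat2) = Qm) : Ad Qu Zm = Zm := by
  rw [conj_phase_apply hQu]; simp [Qm, Zm]

end Gates

section Words

variable {Hu Qu : U₂} (hH : Hu ∈ PauliNormalizer) (hQ : Qu ∈ PauliNormalizer)

lemma exists_conj_Xm_eq (hHu : (Hu : Mat2) = Hm) (hQu : (Qu : Mat2) = Qm) {σ : Mat2}
    (hσ : σ ∈ signedPaulis) :
    ∃ w ∈ Subgroup.closure {(⟨Hu, hH⟩ : PauliNormalizer), ⟨Qu, hQ⟩}, Ad w Xm = σ := by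
  have hh : ⟨Hu, hH⟩ ∈ Subgroup.closure {(⟨Hu, hH⟩ : PauliNormalizer), ⟨Qu, hQ⟩} :=
    Subgroup.subset_closure (by simp)
  have hq : ⟨Qu, hQ⟩ ∈ Subgroup.closure {(⟨Hu, hH⟩ : PauliNormalizer), ⟨Qu, hQ⟩} :=
    Subgroup.subset_closure (by simp)
  simp only [signedPaulis, Set.mem_insert_iff, Set.mem_singleton_iff] at hσ
  rcases hσ with rfl | rfl | rfl | rfl | rfl | rfl <;>
    [refine ⟨1, one_mem _, ?_⟩; refine ⟨_, mul_mem hq hq, ?_⟩; refine ⟨_, hq, ?_⟩;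
      refine ⟨_, mul_mem (mul_mem hq hq) hq, ?_⟩; refine ⟨_, hh, ?_⟩;
      refine ⟨_, mul_mem (mul_mem hh hq) hq, ?_⟩] <;>
    simp only [OneMemClass.coe_one, map_one, StarAlgEquiv.one_apply, Subgroup.coe_mul,
      map_mul, StarAlgEquiv.mul_apply, map_neg, conj_phase_Xm hQu, conj_phase_Ym hQu,
      conj_hadamard_Xm hHu]

lemma exists_conj_Xm_eq_Xm_conj_Zm_eq (hHu : (Hu : Mat2) = Hm) (hQu : (Qu : Mat2) = Qm)
    {τ : Mat2} (hτ : τ ∈ ({Ym, -Ym, Zm, -Zm} : Set Mat2)) :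
    ∃ w ∈ Subgroup.closure {(⟨Hu, hH⟩ : PauliNormalizer), ⟨Qu, hQ⟩},
      Ad w Xm = Xm ∧ Ad w Zm = τ := by
  have hh : ⟨Hu, hH⟩ ∈ Subgroup.closure {(⟨Hu, hH⟩ : PauliNormalizer), ⟨Qu, hQ⟩} :=
    Subgroup.subset_closure (by simp)
  have hq : ⟨Qu, hQ⟩ ∈ Subgroup.closure {(⟨Hu, hH⟩ : PauliNormalizer), ⟨Qu, hQ⟩} :=
    Subgroup.subset_closure (by simp)
  simp only [Set.mem_insert_iff, Set.mem_singleton_iff] at hτ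
  rcases hτ with rfl | rfl | rfl | rfl <;>
    [refine ⟨_, mul_mem (mul_mem (mul_mem (mul_mem hh hq) hq) hq) hh, ?_⟩;
      refine ⟨_, mul_mem (mul_mem hh hq) hh, ?_⟩; refine ⟨1, one_mem _, ?_⟩;
      refine ⟨_, mul_mem (mul_mem (mul_mem hh hq) hq) hh, ?_⟩] <;>
    simp only [OneMemClass.coe_one, map_one, StarAlgEquiv.one_apply, Subgroup.coe_mul,
      map_mul, StarAlgEquiv.mul_apply, map_neg, neg_neg, conj_phase_Xm hQu, conj_phase_Ym hQu,
      conj_phase_Zm hQu, conj_hadamard_Xm hHu, conj_hadamard_Ym hHu, conj_hadamard_Zm hHu,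
      and_self]

lemma exists_mem_closure_conj_Xm_Zm_eq (hHu : (Hu : Mat2) = Hm) (hQu : (Qu : Mat2) = Qm)
    (g : PauliNormalizer) :
    ∃ w ∈ Subgroup.closure {(⟨Hu, hH⟩ : PauliNormalizer), ⟨Qu, hQ⟩},
      Ad w Xm = Ad g Xm ∧ Ad w Zm = Ad g Zm := by
  have hXu : Xu ∈ PauliGroup := Subgroup.subset_closure (by simp)
  have hZu : Zu ∈ PauliGroup := Subgroup.subset_closure (by simp)
  have hgX : Ad g Xm ∈ signedPaulis :=
    conj_mem_signedPaulis (V := Xu) g.2 hXu trace_Xm Xm_mul_Xm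
  obtain ⟨w₁, hw₁, hX₁⟩ := exists_conj_Xm_eq hH hQ hHu hQu hgX
  obtain ⟨g', rfl⟩ : ∃ g', g = w₁ * g' :=
    ⟨w₁⁻¹ * g, (mul_inv_cancel_left w₁ g).symm⟩
  have hX' : Ad g' Xm = Xm := by
    apply EquivLike.injective (Ad w₁)
    rw [hX₁, Subgroup.coe_mul, map_mul, StarAlgEquiv.mul_apply]
  have hZ' : Ad g' Zm ∈ ({Ym, -Ym, Zm, -Zm} : Set Mat2) := by
    have hg'Z : Ad g' Zm ∈ signedPaulis :=
      conj_mem_signedPaulis (V := Zu) g'.2 hZu trace_Zm Zm_mul_Zm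
    refine mem_of_mem_signedPaulis_of_anticommute hg'Z ?_
    rw [← hX', ← map_mul, Zm_mul_Xm_eq_neg, map_neg, map_mul]
  obtain ⟨w₂, hw₂, hX₂, hZ₂⟩ := exists_conj_Xm_eq_Xm_conj_Zm_eq hH hQ hHu hQu hZ'
  refine ⟨w₁ * w₂, mul_mem hw₁ hw₂, ?_, ?_⟩ <;>
    simp only [Subgroup.coe_mul, map_mul, StarAlgEquiv.mul_apply, hX₂, hZ₂, hX']

end Words

lemma mk_eq_mk_of_conj_Xm_Zm_eq {g w : PauliNormalizer} (hX : Ad g Xm = Ad w Xm)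
    (hZ : Ad g Zm = Ad w Zm) : (QuotientGroup.mk g : Cliff1) = QuotientGroup.mk w := by
  obtain ⟨α, hα⟩ := (Unitary.conjStarAlgAut_ext_iff _ _).1
    (starAlgEquiv_ext_of_Xm_Zm hX.symm hZ.symm)
  refine QuotientGroup.eq.2 ⟨α, ?_⟩
  show star (g : Mat2) * w = α • 1
  rw [hα, Matrix.mul_smul, Unitary.coe_star_mul_self]

/-- The one-qubit Clifford group (the normalizer of the Pauli group in
`U(2)` modulo global phases) is generated by the images of the Hadamard gate `H` and
the phase gate `Q`. -/
theorem clifford_generated_by_H_Q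
    (Hu Qu : Matrix.unitaryGroup (Fin 2) ℂ)
    (hHu : (Hu : Mat2) = Hm) (hQu : (Qu : Mat2) = Qm)
    (hH : Hu ∈ PauliNormalizer) (hQ : Qu ∈ PauliNormalizer) :
    Subgroup.closure
      {(QuotientGroup.mk (⟨Hu, hH⟩ : PauliNormalizer) : Cliff1),
       (QuotientGroup.mk (⟨Qu, hQ⟩ : PauliNormalizer) : Cliff1)} = ⊤ := by
  refine eq_top_iff.2 fun x _ => ?_
  induction x using QuotientGroup.induction_on with | H g => ?_
  obtain ⟨w, hw, hX, hZ⟩ := exists_mem_closure_conj_Xm_Zm_eq hH hQ hHu hQu g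
  rw [← mk_eq_mk_of_conj_Xm_Zm_eq hX hZ]
  simpa [MonoidHom.map_closure, Set.image_insert_eq] using
    Subgroup.mem_map_of_mem (QuotientGroup.mk' (ScalarU.subgroupOf PauliNormalizer)) hw
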